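/- For even k, the k×k central difference matrix D_c (with 1/2 on the superdiagonal and -1/2 on the subdiagonal) is invertible. -/

import Mathlib

/-!
Extend `v` by zeros to a sequence `u` with `u 0 = 0` and `u (k + 1) = 0`. Row `i` of
`ctrDiff k *ᵥ v = 0` reads `u (i + 2) = u i`, so `u` is constant on even and on odd indices up to
`k + 1`. The even ones vanish because `u 0 = 0`, the odd ones because `k + 1` is odd. Thus
`ctrDiff k` has trivial kernel, hence is invertible.
-/

/-- Central difference matrix: 1/2 on the superdiagonal, -1/2 on the subdiagonal. -/
noncomputable def ctrDiff (k : ℕ) : Matrix (Fin k) (Fin k) ℝ :=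
  Matrix.of fun i j =>
    if (j : ℕ) = (i : ℕ) + 1 then 1/2 else if (i : ℕ) = (j : ℕ) + 1 then -(1/2) else 0

open Matrix

def padZero {R : Type*} [Zero R] {k : ℕ} (v : Fin k → R) : ℕ → R
  | 0 => 0
  | n + 1 => if h : n < k then v ⟨n, h⟩ else 0

section padZero
variable {R : Type*} [Zero R] {k : ℕ} (v : Fin k → R)

@[simp] lemma padZero_zero : padZero v 0 = 0 := rfl

@[simp] lemma padZero_succ_self : padZero v (k + 1) = 0 := by simp [padZero]

@[simp] lemma padZero_succ_val (j : Fin k) : padZero v (j + 1) = v j := by simp [padZero]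

end padZero

lemma ctrDiff_mulVec_apply {k : ℕ} (v : Fin k → ℝ) (i : Fin k) :
    (ctrDiff k *ᵥ v) i = (padZero v (i + 2) - padZero v i) / 2 := by
  obtain ⟨i, hi⟩ := i
  set u := padZero v
  have entry : ∀ j : ℕ,
      (if j = i + 1 then (1/2 : ℝ) else if i = j + 1 then -(1/2) else 0) * u (j + 1)
        = (if j = i + 1 then u (i + 2) / 2 else 0) - (if j + 1 = i then u i / 2 else 0) := by
    intro j; split_ifs <;> first | omega | (subst_vars; ring)
  have right : (if i + 1 < k then u (i + 2) / 2 else 0) = u (i + 2) / 2 := by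
    split_ifs with h
    · rfl
    · simp [u, show i + 2 = k + 1 by omega]
  simp only [mulVec, dotProduct, ctrDiff, of_apply, ← padZero_succ_val v]
  rw [Fin.sum_univ_eq_sum_range (fun j => (if j = i + 1 then (1/2 : ℝ)
    else if i = j + 1 then -(1/2) else 0) * u (j + 1))]
  simp only [entry, Finset.sum_sub_distrib, Finset.sum_ite_eq', Finset.mem_range, right]
  rcases i with _ | m
  · simp [u]
  · simp only [Nat.add_right_cancel_iff, Finset.sum_ite_eq', Finset.mem_range, show m < k by omega,
      ↓reduceIte]
    ring

theorem Nat.apply_eq_apply_mod_two_of_add_two {α : Type*} {u : ℕ → α} {N : ℕ}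
    (h : ∀ n, n + 2 ≤ N → u (n + 2) = u n) : ∀ n ≤ N, u n = u (n % 2)
  | 0, _ => rfl
  | 1, _ => rfl
  | n + 2, hn => by
    rw [h n hn, Nat.add_mod_right]
    exact Nat.apply_eq_apply_mod_two_of_add_two h n (by omega)

lemma ctrDiff_mulVec_eq_zero {k : ℕ} (hk : Even k) {v : Fin k → ℝ} (hv : ctrDiff k *ᵥ v = 0) :
    v = 0 := by
  have step : ∀ n, n + 2 ≤ k + 1 → padZero v (n + 2) = padZero v n := fun n hn => by
    have := ctrDiff_mulVec_apply v ⟨n, by omega⟩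
    rw [hv, Pi.zero_apply] at this
    linarith
  have one : padZero v 1 = 0 := by
    rw [← Nat.odd_iff.1 hk.add_one, ← Nat.apply_eq_apply_mod_two_of_add_two step _ le_rfl,
      padZero_succ_self]
  funext j
  rw [Pi.zero_apply, ← padZero_succ_val v j,
    Nat.apply_eq_apply_mod_two_of_add_two step _ (by omega)]
  rcases Nat.mod_two_eq_zero_or_one (j + 1) with h | h <;> rw [h]
  · rfl
  · exact one

theorem ctrDiff_invertible_even (k : ℕ) (hk : Even k) :
    ∃ E : Matrix (Fin k) (Fin k) ℝ, ctrDiff k * E = 1 ∧ E * ctrDiff k = 1 := by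
  have hinj : Function.Injective (ctrDiff k).mulVec :=
    (injective_iff_map_eq_zero (ctrDiff k).mulVecLin).2 fun _ => ctrDiff_mulVec_eq_zero hk
  obtain ⟨u, hu⟩ := mulVec_injective_iff_isUnit.1 hinj
  exact ⟨↑u⁻¹, hu ▸ u.mul_inv, hu ▸ u.inv_mul⟩
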